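/- arXiv:2101.06527 — 2 statements merged into one kernel-verified Lean document; each statement's English description precedes it below -/
import Mathlib

section
/- Let F be a hyperfield. Then F is a real reduced multiring if and only if: 1 ≠ 0, a² = 1 for every nonzero a ∈ F, and 1+1 = {1}. -/
universe u v

/-- A multiring: a commutative monoid with a multivalued addition. -/
class Multiring (A : Type u) extends CommMonoid A, Zero A, Neg A where
  /-- the multivalued sum: `madd b c` is the set `b + c` -/
  madd : A → A → Set A
  madd_nonempty : ∀ a b : A, (madd a b).Nonempty
  madd_rev_left : ∀ a b c : A, a ∈ madd b c → c ∈ madd (-b) a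
  madd_rev_right : ∀ a b c : A, a ∈ madd b c → b ∈ madd a (-c)
  mem_madd_zero : ∀ a b : A, a ∈ madd b 0 ↔ a = b
  madd_assoc : ∀ a b c g x : A, g ∈ madd a b → x ∈ madd g c →
    ∃ h ∈ madd b c, x ∈ madd a h
  madd_comm : ∀ a b : A, madd a b = madd b a
  mul_zero' : ∀ a : A, a * 0 = 0
  madd_mul : ∀ a b c d : A, a ∈ madd b c → a * d ∈ madd (b * d) (c * d)

namespace Multiring

variable {A : Type u} [Multiring A]

/-- the iterated multivalued sum `x₁ + ⋯ + xₙ = {x₁} + (x₂ + ⋯ + xₙ)` of a list -/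
def listSum : List A → Set A
  | [] => {(0 : A)}
  | a :: l => {x : A | ∃ y ∈ listSum l, x ∈ madd a y}

/-- an ideal of a multiring: a nonempty subset with `I + I ⊆ I` and `A·I ⊆ I` -/
def IsIdeal (I : Set A) : Prop :=
  I.Nonempty ∧ (∀ a ∈ I, ∀ b ∈ I, madd a b ⊆ I) ∧ ∀ a : A, ∀ b ∈ I, a * b ∈ I

/-- a prime ideal: a proper ideal such that `a*b ∈ p → a ∈ p ∨ b ∈ p` -/
def IsPrimeIdeal (I : Set A) : Prop :=
  IsIdeal I ∧ (1 : A) ∉ I ∧ ∀ a b : A, a * b ∈ I → a ∈ I ∨ b ∈ I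

/-- a maximal ideal: a proper ideal maximal among proper ideals -/
def IsMaximalIdeal (I : Set A) : Prop :=
  IsIdeal I ∧ (1 : A) ∉ I ∧ ∀ J : Set A, IsIdeal J → (1 : A) ∉ J → I ⊆ J → J = I

/-- a multiplicative subset -/
def IsMultiplicative (S : Set A) : Prop :=
  (1 : A) ∈ S ∧ ∀ s ∈ S, ∀ t ∈ S, s * t ∈ S

/-- a hyperring: a multiring with the strong distributivity property -/
def IsHyperring (A : Type u) [Multiring A] : Prop :=
  ∀ x b c d : A, x ∈ madd (b * d) (c * d) → ∃ a ∈ madd b c, x = a * d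

/-- a von Neumann (regular) hyperring -/
def IsVonNeumann (A : Type u) [Multiring A] : Prop :=
  IsHyperring A ∧ ∀ a : A, ∃ b : A, a = a * a * b

/-- the equivalence modulo an ideal `I`: `a ∼_I b` iff `(a + (-b)) ∩ I ≠ ∅`;
this is equality of classes in the quotient multiring `A/I`. -/
def simI (I : Set A) (a b : A) : Prop := ∃ x ∈ madd a (-b), x ∈ I

/-- membership of classes in the multivalued sum of the quotient `A/I`:
`[a] ∈ [b] + [c]` iff `a ∈ b + c + i` for some `i ∈ I`. -/
def qmemI (I : Set A) (a b c : A) : Prop := ∃ i ∈ I, ∃ w ∈ madd c i, a ∈ madd b w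

/-- representatives `x` with `[x] ∈ [c₁] + ⋯ + [cₙ]` in the quotient `A/I` -/
def qlistSumI (I : Set A) : List A → Set A
  | [] => {x : A | simI I x 0}
  | c :: l => {x : A | ∃ y ∈ qlistSumI I l, qmemI I x c y}

/-- the quotient multiring `A/I` is a multifield: `1 ≠ 0` and every nonzero
element is weak-invertible -/
def QuotIsMultifield (I : Set A) : Prop :=
  ¬ simI I 1 0 ∧
    ∀ a : A, ¬ simI I a 0 →
      ∃ l : List A, l ≠ [] ∧ (1 : A) ∈ qlistSumI I (l.map fun b => a * b)

/-- the quotient multiring `A/I` is a hyperfield: `1 ≠ 0` and every nonzero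
element is invertible -/
def QuotIsHyperfield (I : Set A) : Prop :=
  ¬ simI I 1 0 ∧ ∀ a : A, ¬ simI I a 0 → ∃ b : A, simI I (a * b) 1

/-- the Marshall equivalence associated to a multiplicative set `S`:
`a ∼_S b` iff `as = bt` for some `s,t ∈ S`; this is equality of classes in the
Marshall quotient `A/ₘS`. -/
def simM (S : Set A) (a b : A) : Prop := ∃ s ∈ S, ∃ t ∈ S, a * s = b * t

/-- `S̄ = {x : xs ∈ S for some s ∈ S}` -/
def mbar (S : Set A) : Set A := {x : A | ∃ s ∈ S, x * s ∈ S}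

/-- membership of classes in the multivalued sum of the Marshall quotient `A/ₘS`:
`[a] ∈ [b] + [c]` iff `as ∈ bt + cu` for some `s,t,u ∈ S`. -/
def qmemM (S : Set A) (a b c : A) : Prop :=
  ∃ s ∈ S, ∃ t ∈ S, ∃ u ∈ S, a * s ∈ madd (b * t) (c * u)

/-- representatives `x` with `[x] ∈ [c₁] + ⋯ + [cₙ]` in the Marshall quotient `A/ₘS` -/
def qlistSumM (S : Set A) : List A → Set A
  | [] => {x : A | simM S x 0}
  | c :: l => {x : A | ∃ y ∈ qlistSumM S l, qmemM S x c y}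

/-- the multivalued sum of the hyperfield `3 = {-1, 0, 1}` -/
def signAdd : SignType → SignType → Set SignType
  | SignType.zero, x => {x}
  | x, SignType.zero => {x}
  | SignType.pos, SignType.pos => {SignType.pos}
  | SignType.neg, SignType.neg => {SignType.neg}
  | _, _ => Set.univ

/-- a multiring morphism `A → 3`, i.e. an order of `A` -/
def IsSignMorphism (σ : A → SignType) : Prop :=
  (∀ a b c : A, a ∈ madd b c → σ a ∈ signAdd (σ b) (σ c)) ∧
  (∀ a b : A, σ (a * b) = σ a * σ b) ∧
  (∀ a : A, σ (-a) = -(σ a)) ∧ σ 0 = 0 ∧ σ 1 = 1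

/-- a prime cone of a multiring -/
def IsPrimeCone (P : Set A) : Prop :=
  (∀ a : A, a * a ∈ P) ∧ (∀ a ∈ P, ∀ b ∈ P, madd a b ⊆ P) ∧
  (∀ a ∈ P, ∀ b ∈ P, a * b ∈ P) ∧ (∀ a : A, a ∈ P ∨ -a ∈ P) ∧
  IsPrimeIdeal {x : A | x ∈ P ∧ -x ∈ P}

open Classical in
/-- the map `σ_P : A → 3` associated to a prime cone `P` -/
noncomputable def sigmaOf (P : Set A) (a : A) : SignType :=
  if a ∈ P ∧ -a ∈ P then 0 else if a ∈ P then 1 else -1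

/-- `ΣA²`: the set of elements lying in some finite sum of squares -/
def SumsOfSquares (A : Type u) [Multiring A] : Set A :=
  {x : A | ∃ l : List A, l ≠ [] ∧ x ∈ listSum (l.map fun a => a * a)}

/-- a multiring is semi-real when `-1 ∉ ΣA²` -/
def IsSemiReal (A : Type u) [Multiring A] : Prop := (-(1 : A)) ∉ SumsOfSquares A

/-- a real reduced multiring -/
def IsRealReduced (A : Type u) [Multiring A] : Prop :=
  IsSemiReal A ∧ (∀ a : A, a * a * a = a) ∧
  (∀ a b : A, madd a (a * b * b) = {a}) ∧
  (∀ a b : A, ∃ c : A, madd (a * a) (b * b) = {c})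

/-- a hyperfield: a hyperring with `1 ≠ 0` and all nonzero elements invertible -/
def IsHyperfield (A : Type u) [Multiring A] : Prop :=
  IsHyperring A ∧ (1 : A) ≠ 0 ∧ ∀ a : A, a ≠ 0 → ∃ b : A, a * b = 1

/-- a morphism of multirings -/
def IsMorphism {B : Type v} [Multiring B] (f : A → B) : Prop :=
  (∀ a b c : A, a ∈ madd b c → f a ∈ madd (f b) (f c)) ∧
  (∀ a b : A, f (a * b) = f a * f b) ∧
  (∀ a : A, f (-a) = -(f a)) ∧ f 0 = 0 ∧ f 1 = 1

/-- the radical `√α = {x : xⁿ ∈ α for some n ≥ 1}` of an ideal -/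
def radical (α : Set A) : Set A := {x : A | ∃ n : ℕ, 1 ≤ n ∧ x ^ n ∈ α}

/-- the ideal `(x) = ∪ {t₁x + ⋯ + tₙx}` generated by `x` -/
def genIdeal (x : A) : Set A :=
  {y : A | ∃ l : List A, l ≠ [] ∧ y ∈ listSum (l.map fun t => t * x)}

/-- `S_a = {x : aⁿ ∈ (x) for some n ≥ 0}` -/
def Sgen (a : A) : Set A := {x : A | ∃ n : ℕ, a ^ n ∈ genIdeal x}

/-- `a` is weak-invertible when `1 ∈ ab₁ + ⋯ + abₙ` for some `b₁,…,bₙ` -/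
def WeakInvertible (a : A) : Prop :=
  ∃ l : List A, l ≠ [] ∧ (1 : A) ∈ listSum (l.map fun b => a * b)

/-- the prime spectrum of a multiring -/
abbrev Spec (A : Type u) [Multiring A] : Type u := {p : Set A // IsPrimeIdeal p}

/-- the spectral topology on `spec A`, generated by the sets `D(a) = {p : a ∉ p}` -/
instance : TopologicalSpace (Spec A) :=
  TopologicalSpace.generateFrom {U : Set (Spec A) | ∃ a : A, U = {p : Spec A | a ∉ p.1}}

/-- the Marshall quotient `A/ₘS` is a real reduced multiring (expressed on
representatives) -/
def QuotIsRealReduced (S : Set A) : Prop :=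
  (∀ l : List A, l ≠ [] → (-(1 : A)) ∉ qlistSumM S (l.map fun a => a * a)) ∧
  (∀ a : A, simM S (a * a * a) a) ∧
  (∀ a b x : A, qmemM S x a (a * b * b) ↔ simM S x a) ∧
  (∀ a b : A, ∃ c : A, ∀ x : A, qmemM S x (a * a) (b * b) ↔ simM S x c)

/-- the Marshall quotient `A/ₘS` is a geometric von Neumann hyperring
(expressed on representatives): it is a hyperring, von Neumann regular, and
`e + eᶜ = {1}` for every idempotent `e` -/
def QuotGeometricVN (S : Set A) : Prop :=
  (∀ x b c d : A, qmemM S x (b * d) (c * d) → ∃ a : A, qmemM S a b c ∧ simM S x (a * d)) ∧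
  (∀ a : A, ∃ b : A, simM S a (a * a * b)) ∧
  (∀ e x : A, simM S (e * e) e → qmemM S x 1 (-e) → simM S (e * x) 0 →
    ∀ y : A, qmemM S y e x ↔ simM S y 1)

/-- a von Neumann subgroup: a multiplicative set such that for every idempotent
`a` (with complement `aᶜ`) and every `x ∈ D_S(a, aᶜ)` there is `s ∈ S` with `xs ∈ S` -/
def IsVNSubgroup (S : Set A) : Prop :=
  IsMultiplicative S ∧
    ∀ a x ac : A, a * a = a → ac ∈ madd 1 (-a) → a * ac = 0 →
      (∃ u ∈ S, ∃ v ∈ S, ∃ w ∈ S, x * u ∈ madd (a * v) (ac * w)) →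
      ∃ s ∈ S, x * s ∈ S

/-- a preorder of a multiring -/
def IsPreorderSet (T : Set A) : Prop :=
  (∀ a : A, a * a ∈ T) ∧ (∀ a ∈ T, ∀ b ∈ T, a * b ∈ T) ∧ (∀ a ∈ T, ∀ b ∈ T, madd a b ⊆ T)

/-- `1 + T = ∪ {1 + t : t ∈ T}` -/
def oneAdd (T : Set A) : Set A := {x : A | ∃ t ∈ T, x ∈ madd 1 t}

/-- `ΣḞ²`: elements lying in some finite sum of squares of nonzero elements -/
def sumSqNonzero (A : Type u) [Multiring A] : Set A :=
  {x : A | ∃ l : List A, l ≠ [] ∧ (∀ a ∈ l, a ≠ 0) ∧ x ∈ listSum (l.map fun a => a * a)}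

/-! In a hyperfield, `a³ = a` forces `a² = 1` for every unit `a`, and `1 + 1 = {1}` is the
axiom `a + ab² = {a}` at `a = b = 1`. Conversely, strong distributivity turns `1 + 1 = {1}` into
`a + a = {a}`; every square is `0` or `1`, so every sum of squares lies in `{0, 1}`, which does
not contain `-1` because `0 ∈ -1 + 1`. -/

theorem madd_zero (a : A) : madd a 0 = {a} := by
  ext x; exact mem_madd_zero x a

theorem zero_madd (a : A) : madd 0 a = {a} := by
  rw [madd_comm]; exact madd_zero a

theorem zero_mem_neg_madd_self (a : A) : (0 : A) ∈ madd (-a) a :=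
  madd_rev_left a a 0 ((mem_madd_zero a a).2 rfl)

theorem listSum_subset {S : Set A} (h0 : (0 : A) ∈ S)
    (hS : ∀ a ∈ S, ∀ b ∈ S, madd a b ⊆ S) : ∀ l : List A, (∀ a ∈ l, a ∈ S) → listSum l ⊆ S
  | [], _ => by simpa [listSum] using h0
  | a :: l, hl => by
    rintro x ⟨y, hy, hx⟩
    exact hS a (hl a List.mem_cons_self) y
      (listSum_subset h0 hS l (fun b hb => hl b (List.mem_cons_of_mem a hb)) hy) hx

theorem IsRealReduced.madd_one_one (h : IsRealReduced A) : madd (1 : A) 1 = {1} := by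
  simpa using h.2.2.1 1 1

theorem IsRealReduced.mul_self_eq_one {a b : A} (h : IsRealReduced A) (hab : a * b = 1) :
    a * a = 1 :=
  calc a * a = a * a * a * b := by rw [mul_assoc _ a b, hab, mul_one]
    _ = 1 := by rw [h.2.1 a, hab]

theorem IsHyperring.madd_self (hHR : IsHyperring A) (h11 : madd (1 : A) 1 = {1}) (a : A) :
    madd a a = {a} := by
  ext x
  constructor
  · intro hx
    obtain ⟨c, hc, rfl⟩ := hHR x 1 1 a (by simpa using hx)
    rw [h11, Set.mem_singleton_iff] at hc
    rw [hc, one_mul, Set.mem_singleton_iff]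
  · rintro rfl
    simpa using madd_mul 1 1 1 x (h11 ▸ rfl : (1 : A) ∈ madd 1 1)

theorem mul_self_mem_zero_one (hsq : ∀ a : A, a ≠ 0 → a * a = 1) (a : A) :
    a * a ∈ ({0, 1} : Set A) := by
  by_cases ha : a = 0
  · left; rw [ha, mul_zero']
  · right; exact hsq a ha

theorem exists_madd_eq_singleton_of_mem_zero_one (h11 : madd (1 : A) 1 = {1}) {x y : A}
    (hx : x ∈ ({0, 1} : Set A)) (hy : y ∈ ({0, 1} : Set A)) :
    ∃ c ∈ ({0, 1} : Set A), madd x y = {c} := by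
  rcases hx with rfl | rfl
  · exact ⟨y, hy, zero_madd y⟩
  rcases hy with rfl | rfl
  · exact ⟨1, Or.inr rfl, madd_zero 1⟩
  · exact ⟨1, Or.inr rfl, h11⟩

theorem sumsOfSquares_subset_zero_one (hsq : ∀ a : A, a ≠ 0 → a * a = 1)
    (h11 : madd (1 : A) 1 = {1}) : SumsOfSquares A ⊆ {0, 1} := by
  rintro x ⟨l, -, hx⟩
  refine listSum_subset (S := {0, 1}) (Or.inl rfl) (fun a ha b hb => ?_) _ ?_ hx
  · obtain ⟨c, hc, hab⟩ := exists_madd_eq_singleton_of_mem_zero_one h11 ha hb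
    rwa [hab, Set.singleton_subset_iff]
  · simpa using fun a _ => mul_self_mem_zero_one hsq a

theorem isSemiReal_of_mul_self_eq_one (h10 : (1 : A) ≠ 0) (hsq : ∀ a : A, a ≠ 0 → a * a = 1)
    (h11 : madd (1 : A) 1 = {1}) : IsSemiReal A := by
  intro hneg
  have h0 := zero_mem_neg_madd_self (1 : A)
  rcases sumsOfSquares_subset_zero_one hsq h11 hneg with hn | hn
  · rw [hn, zero_madd, Set.mem_singleton_iff] at h0
    exact h10 h0.symm
  · rw [hn, h11, Set.mem_singleton_iff] at h0
    exact h10 h0.symm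

theorem IsHyperring.isRealReduced (hHR : IsHyperring A) (h10 : (1 : A) ≠ 0)
    (hsq : ∀ a : A, a ≠ 0 → a * a = 1) (h11 : madd (1 : A) 1 = {1}) : IsRealReduced A := by
  refine ⟨isSemiReal_of_mul_self_eq_one h10 hsq h11, fun a => ?_, fun a b => ?_, fun a b => ?_⟩
  · by_cases ha : a = 0
    · rw [ha, mul_zero']
    · rw [hsq a ha, one_mul]
  · by_cases hb : b = 0
    · rw [hb, mul_zero', madd_zero]
    · rw [mul_assoc, hsq b hb, mul_one, hHR.madd_self h11]
  · obtain ⟨c, -, hc⟩ := exists_madd_eq_singleton_of_mem_zero_one h11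
      (mul_self_mem_zero_one hsq a) (mul_self_mem_zero_one hsq b)
    exact ⟨c, hc⟩

end Multiring

/-- A hyperfield `F` is a real reduced multiring iff `1 ≠ 0`, `a² = 1` for all
nonzero `a`, and `1 + 1 = {1}`. -/
theorem hyperfield_realReduced_iff {F : Type u} [Multiring F]
    (hF : Multiring.IsHyperfield F) :
    Multiring.IsRealReduced F ↔
      ((1 : F) ≠ 0 ∧ (∀ a : F, a ≠ 0 → a * a = 1) ∧
        Multiring.madd (1 : F) 1 = {1}) := by
  obtain ⟨hHR, h10, hinv⟩ := hF
  refine ⟨fun h => ⟨h10, fun a ha => ?_, h.madd_one_one⟩,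
    fun ⟨_, hsq, h11⟩ => hHR.isRealReduced h10 hsq h11⟩
  obtain ⟨b, hb⟩ := hinv a ha
  exact h.mul_self_eq_one hb
end

section
/- Let A be a multiring and α an ideal of A. Then √α equals the intersection of all prime ideals of A containing α. In particular, the intersection of all prime ideals of A equals the set of nilpotent elements of A. -/
universe u v

/-!
If no power `xⁿ` (`n ≥ 1`) lies in `α`, Zorn's lemma gives an ideal `M ⊇ α` maximal among the
ideals whose radical misses `x`. It is prime: if `a, b ∉ M` but `ab ∈ M`, maximality puts powers of
`x` into the ideals generated by `M ∪ {a}` and `M ∪ {b}`, and the product of two elements of these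
ideals lies in `M`. Since distributivity only holds in the weak form `a ∈ b + c → ad ∈ bd + cd`,
the ideal generated by `M ∪ {a}` is not `M + Aa`; it consists of the elements of the iterated
sums `t₁g₁ + ⋯ + tₙgₙ` with all `gᵢ ∈ M ∪ {a}`.
-/

namespace Multiring

variable {A : Type u} [Multiring A]

theorem zero_mul' (a : A) : (0 : A) * a = 0 := by
  rw [mul_comm, mul_zero']

theorem mem_madd_zero_left {a b : A} (h : a ∈ madd 0 b) : a = b := by
  rwa [madd_comm, mem_madd_zero] at h

theorem listSum_append {l₁ l₂ : List A} {y z w : A} (hy : y ∈ listSum l₁)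
    (hz : z ∈ listSum l₂) (hw : w ∈ madd y z) : w ∈ listSum (l₁ ++ l₂) := by
  induction l₁ generalizing y w with
  | nil =>
    obtain rfl : y = 0 := hy
    rwa [List.nil_append, mem_madd_zero_left hw]
  | cons a t ih =>
    obtain ⟨y', hy', hy⟩ := hy
    obtain ⟨h, hh, hw⟩ := madd_assoc a y' z y w hy hw
    exact ⟨h, ih hy' hh, hw⟩

theorem mul_mem_listSum_map_mul {l : List A} {y : A} (hy : y ∈ listSum l) (d : A) :
    y * d ∈ listSum (l.map (· * d)) := by
  induction l generalizing y with
  | nil =>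
    obtain rfl : y = 0 := hy
    exact zero_mul' d
  | cons a t ih =>
    obtain ⟨y', hy', hy⟩ := hy
    exact ⟨y' * d, ih hy', madd_mul y a y' d hy⟩

namespace IsIdeal

variable {I : Set A}

theorem mul_mem_left (hI : IsIdeal I) (a : A) {b : A} (hb : b ∈ I) : a * b ∈ I :=
  hI.2.2 a b hb

theorem mul_mem_right (hI : IsIdeal I) {a : A} (b : A) (ha : a ∈ I) : a * b ∈ I :=
  mul_comm b a ▸ hI.mul_mem_left b ha

theorem zero_mem (hI : IsIdeal I) : (0 : A) ∈ I := by
  obtain ⟨b, hb⟩ := hI.1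
  simpa only [zero_mul'] using hI.mul_mem_left 0 hb

theorem listSum_subset (hI : IsIdeal I) {l : List A} (hl : ∀ z ∈ l, z ∈ I) :
    listSum l ⊆ I := by
  induction l with
  | nil => exact Set.singleton_subset_iff.mpr hI.zero_mem
  | cons a t ih =>
    rintro y ⟨y', hy', hy⟩
    exact hI.2.1 a (hl a List.mem_cons_self) y'
      (ih (fun z hz => hl z (List.mem_cons_of_mem a hz)) hy') hy

end IsIdeal

theorem isIdeal_singleton_zero : IsIdeal ({0} : Set A) :=
  ⟨⟨0, rfl⟩, fun _ ha _ hb w hw => by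
    rw [ha, hb] at hw
    exact (mem_madd_zero w 0).mp hw, fun a _ hb => by rw [hb, mul_zero']; rfl⟩

theorem isIdeal_sUnion {c : Set (Set A)} (hc : ∀ I ∈ c, IsIdeal I)
    (hchain : IsChain (· ⊆ ·) c) (hne : c.Nonempty) : IsIdeal (⋃₀ c) := by
  obtain ⟨I₀, hI₀⟩ := hne
  refine ⟨⟨0, I₀, hI₀, (hc I₀ hI₀).zero_mem⟩, ?_, ?_⟩
  · rintro a ⟨I, hI, haI⟩ b ⟨J, hJ, hbJ⟩
    rcases hchain.total hI hJ with hIJ | hJI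
    · exact ((hc J hJ).2.1 a (hIJ haI) b hbJ).trans (Set.subset_sUnion_of_mem hJ)
    · exact ((hc I hI).2.1 a haI b (hJI hbJ)).trans (Set.subset_sUnion_of_mem hI)
  · rintro a b ⟨I, hI, hbI⟩
    exact ⟨I, hI, (hc I hI).mul_mem_left a hbI⟩

def span (X : Set A) : Set A :=
  {y | ∃ l : List A, (∀ z ∈ l, ∃ t, ∃ g ∈ X, z = t * g) ∧ y ∈ listSum l}

theorem isIdeal_span (X : Set A) : IsIdeal (span X) := by
  refine ⟨⟨0, [], by simp, rfl⟩, ?_, ?_⟩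
  · rintro a ⟨l₁, hl₁, ha⟩ b ⟨l₂, hl₂, hb⟩ w hw
    refine ⟨l₁ ++ l₂, fun z hz => ?_, listSum_append ha hb hw⟩
    exact (List.mem_append.mp hz).elim (hl₁ z) (hl₂ z)
  · rintro a b ⟨l, hl, hb⟩
    refine ⟨l.map (· * a), fun z hz => ?_, mul_comm b a ▸ mul_mem_listSum_map_mul hb a⟩
    obtain ⟨w, hw, rfl⟩ := List.mem_map.mp hz
    obtain ⟨t, g, hg, rfl⟩ := hl w hw
    exact ⟨t * a, g, hg, by rw [mul_right_comm]⟩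

theorem subset_span (X : Set A) : X ⊆ span X := fun g hg =>
  ⟨[g], fun z hz => ⟨1, g, hg, by rw [List.mem_singleton.mp hz, one_mul]⟩,
    ⟨0, rfl, (mem_madd_zero g g).mpr rfl⟩⟩

theorem IsIdeal.mul_mem_of_mem_span {I X : Set A} (hI : IsIdeal I) {c y : A}
    (hX : ∀ g ∈ X, g * c ∈ I) (hy : y ∈ span X) : y * c ∈ I := by
  obtain ⟨l, hl, hyl⟩ := hy
  refine hI.listSum_subset (fun z hz => ?_) (mul_mem_listSum_map_mul hyl c)
  obtain ⟨w, hw, rfl⟩ := List.mem_map.mp hz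
  obtain ⟨t, g, hg, rfl⟩ := hl w hw
  rw [mul_assoc]
  exact hI.mul_mem_left t (hX g hg)

theorem IsIdeal.mul_mem_of_mem_span_insert {M : Set A} (hM : IsIdeal M) {a b y z : A}
    (hab : a * b ∈ M) (hy : y ∈ span (insert a M)) (hz : z ∈ span (insert b M)) :
    y * z ∈ M := by
  refine hM.mul_mem_of_mem_span (fun g hg => ?_) hy
  rw [mul_comm]
  refine hM.mul_mem_of_mem_span (fun g' hg' => ?_) hz
  rcases hg with rfl | hg
  · rcases hg' with rfl | hg'
    · rwa [mul_comm]
    · exact hM.mul_mem_right g hg'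
  · exact hM.mul_mem_left g' hg

theorem subset_radical (I : Set A) : I ⊆ radical I := fun x hx =>
  ⟨1, le_rfl, (pow_one x).symm ▸ hx⟩

theorem IsPrimeIdeal.mem_of_pow_mem {p : Set A} (hp : IsPrimeIdeal p) {x : A} {n : ℕ}
    (hn : 1 ≤ n) (hx : x ^ n ∈ p) : x ∈ p := by
  induction n, hn using Nat.le_induction with
  | base => rwa [pow_one] at hx
  | succ n hn ih =>
    rw [pow_succ] at hx
    exact (hp.2.2 _ _ hx).elim ih id

theorem exists_maximal_notMem_radical {α : Set A} (hα : IsIdeal α) {x : A}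
    (hx : x ∉ radical α) : ∃ M, α ⊆ M ∧ Maximal (fun I => IsIdeal I ∧ x ∉ radical I) M := by
  refine zorn_subset_nonempty {I | IsIdeal I ∧ x ∉ radical I}
    (fun c hcS hchain hne => ?_) α ⟨hα, hx⟩
  refine ⟨⋃₀ c, ⟨isIdeal_sUnion (fun I hI => (hcS hI).1) hchain hne, ?_⟩,
    fun I hI => Set.subset_sUnion_of_mem hI⟩
  rintro ⟨n, hn, I, hI, hxI⟩
  exact (hcS hI).2 ⟨n, hn, hxI⟩

theorem isPrimeIdeal_of_maximal_notMem_radical {x : A} {M : Set A}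
    (hM : Maximal (fun I => IsIdeal I ∧ x ∉ radical I) M) : IsPrimeIdeal M := by
  obtain ⟨⟨hMI, hxM⟩, hmax⟩ := hM
  have hspan : ∀ g ∉ M, x ∈ radical (span (insert g M)) := fun g hg => by_contra fun hx =>
    hg <| hmax ⟨isIdeal_span _, hx⟩ ((Set.subset_insert g M).trans (subset_span _))
      (subset_span _ (Set.mem_insert g M))
  refine ⟨hMI, fun h1 => hxM (subset_radical M (mul_one x ▸ hMI.mul_mem_left x h1)),
    fun a b hab => ?_⟩
  by_contra! ⟨ha, hb⟩
  obtain ⟨n, hn, hxn⟩ := hspan a ha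
  obtain ⟨m, -, hxm⟩ := hspan b hb
  exact hxM ⟨n + m, by omega, pow_add x n m ▸ hMI.mul_mem_of_mem_span_insert hab hxn hxm⟩

theorem radical_eq_setOf_forall_isPrimeIdeal {α : Set A} (hα : IsIdeal α) :
    radical α = {x | ∀ p, IsPrimeIdeal p → α ⊆ p → x ∈ p} := by
  ext x
  refine ⟨fun ⟨n, hn, hxn⟩ p hp hαp => hp.mem_of_pow_mem hn (hαp hxn), fun hx => ?_⟩
  by_contra hxα
  obtain ⟨M, hαM, hM⟩ := exists_maximal_notMem_radical hα hxα
  exact hM.1.2 (subset_radical M (hx M (isPrimeIdeal_of_maximal_notMem_radical hM) hαM))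

end Multiring

/-- `√α` is the intersection of all prime ideals containing `α`; in particular
the intersection of all prime ideals is the set of nilpotents. -/
theorem radical_eq_inter_primes {A : Type u} [Multiring A] (α : Set A)
    (hα : Multiring.IsIdeal α) :
    Multiring.radical α =
      {x : A | ∀ p : Set A, Multiring.IsPrimeIdeal p → α ⊆ p → x ∈ p} ∧
    {x : A | ∀ p : Set A, Multiring.IsPrimeIdeal p → x ∈ p} =
      {x : A | ∃ n : ℕ, 1 ≤ n ∧ x ^ n = 0} := by
  refine ⟨Multiring.radical_eq_setOf_forall_isPrimeIdeal hα, ?_⟩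
  have hprimes : {x : A | ∀ p : Set A, Multiring.IsPrimeIdeal p → x ∈ p} =
      {x : A | ∀ p : Set A, Multiring.IsPrimeIdeal p → {0} ⊆ p → x ∈ p} := by
    ext x
    exact ⟨fun hx p hp _ => hx p hp,
      fun hx p hp => hx p hp (Set.singleton_subset_iff.mpr hp.1.zero_mem)⟩
  rw [hprimes, ← Multiring.radical_eq_setOf_forall_isPrimeIdeal Multiring.isIdeal_singleton_zero]
  rfl
end
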